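/- With the hypotheses of the stated context (finite monoid S which is an LRBG, elements e_y ∈ ℂ[S] for idempotent y that are constant on ∼-classes and satisfy Saliola's property, and R_t := H_t·e_{ω t}), the following product formula holds for all s, t ∈ S: H_s·R_t = R_{s·t} if (ω s)·(ω t) ∼ ω t (i.e. supp(s^ω) ≤ supp(t^ω) in the support lattice), and H_s·R_t = 0 otherwise. -/

import Mathlib

/-- The support relation `s ∼ t` on a left regular band of groups:
`(ω s)·t = s` and `(ω t)·s = t`. -/
def LRBGsim {S : Type*} [Mul S] (ω : S → S) (s t : S) : Prop :=
  ω s * t = s ∧ ω t * s = t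

/-!
For an idempotent `e` of an LRBG, `x ↦ e·x` is a monoid homomorphism from `S` onto the corner
`eSe`, whose identity is `e`, because `e·x·e = e·x`. Since `ω u` is an idempotent power of `u`,
it is sent to `e` exactly when `u` is sent to a unit. Hence `e·ω(st) = e ↔ e·ω(s) = e` when
`e = ω t` (which is sent to `e`): the support of `ω(st)` lies above that of `ω t` iff the support
of `ω s` does. This decides both cases, together with `H_{st} = H_{st}·H_{ω(st)}` and Saliola's
property.
-/

theorem iterate_mul_right_self {M : Type*} [Monoid M] (s : M) (n : ℕ) :
    (fun t => t * s)^[n] s = s ^ (n + 1) := by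
  rw [mul_right_iterate_apply, pow_succ']

namespace IsIdempotentElem

variable {S : Type*} {e : S}

instance [Semigroup S] (idem : IsIdempotentElem e) : Monoid idem.Corner where
  __ : Semigroup idem.Corner := inferInstanceAs (Semigroup (Subsemigroup.corner e))
  one := ⟨e, e, by simp_rw [idem.eq]⟩
  one_mul r := Subtype.ext ((Subsemigroup.mem_corner_iff idem).mp r.2).1
  mul_one r := Subtype.ext ((Subsemigroup.mem_corner_iff idem).mp r.2).2

def mulLeftCornerHom [Monoid S] (idem : IsIdempotentElem e) (hreg : ∀ x, e * x * e = e * x) :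
    S →* idem.Corner where
  toFun x := ⟨e * x, x, hreg x⟩
  map_one' := Subtype.ext (mul_one e)
  map_mul' x y := Subtype.ext <| by
    change e * (x * y) = e * x * (e * y)
    rw [← mul_assoc (e * x), hreg, mul_assoc]

end IsIdempotentElem

section LRBG

variable {S : Type*} [Monoid S] {ω : S → S}

theorem omega_eq_self_of_isIdempotentElem (hpow : ∀ s : S, ∃ n : ℕ, ω s = s ^ (n + 1))
    {x : S} (hx : IsIdempotentElem x) : ω x = x := by
  obtain ⟨n, hn⟩ := hpow x
  rw [hn, hx.pow_succ_eq]

theorem mul_omega_eq_self (hleft : ∀ s t : S, s * t * ω s = s * t) (s : S) : s * ω s = s := by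
  simpa using hleft s 1

theorem mul_mul_self_of_isIdempotentElem (hpow : ∀ s : S, ∃ n : ℕ, ω s = s ^ (n + 1))
    (hleft : ∀ s t : S, s * t * ω s = s * t) {x : S} (hx : IsIdempotentElem x) (y : S) :
    x * y * x = x * y := by
  simpa only [omega_eq_self_of_isIdempotentElem hpow hx] using hleft x y

theorem omega_mul_mul_omega_right (hpow : ∀ s : S, ∃ n : ℕ, ω s = s ^ (n + 1))
    (hleft : ∀ s t : S, s * t * ω s = s * t) (s t : S) : ω (s * t) * ω t = ω (s * t) := by
  obtain ⟨n, hn⟩ := hpow (s * t)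
  rw [hn, pow_succ, mul_assoc, mul_assoc, mul_omega_eq_self hleft]

theorem lrbgSim_iff_of_isIdempotentElem (hpow : ∀ s : S, ∃ n : ℕ, ω s = s ^ (n + 1))
    {x y : S} (hx : IsIdempotentElem x) (hy : IsIdempotentElem y) :
    LRBGsim ω x y ↔ x * y = x ∧ y * x = y := by
  rw [LRBGsim, omega_eq_self_of_isIdempotentElem hpow hx,
    omega_eq_self_of_isIdempotentElem hpow hy]

/-- The support-lattice comparison `supp x ≤ supp y` of two idempotents. -/
theorem lrbgSim_mul_iff (hpow : ∀ s : S, ∃ n : ℕ, ω s = s ^ (n + 1))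
    (hleft : ∀ s t : S, s * t * ω s = s * t) {x y : S} (hx : IsIdempotentElem x)
    (hy : IsIdempotentElem y) : LRBGsim ω (x * y) y ↔ y * x = y := by
  have hxy : IsIdempotentElem (x * y) := by
    rw [IsIdempotentElem, ← mul_assoc, mul_mul_self_of_isIdempotentElem hpow hleft hx, mul_assoc,
      hy.eq]
  rw [lrbgSim_iff_of_isIdempotentElem hpow hxy hy, mul_assoc, hy.eq, ← mul_assoc,
    mul_mul_self_of_isIdempotentElem hpow hleft hy]
  exact and_iff_right rfl

theorem map_omega_eq_one_iff {M : Type*} [Monoid M] (hpow : ∀ s : S, ∃ n : ℕ, ω s = s ^ (n + 1))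
    (hidem : ∀ s : S, IsIdempotentElem (ω s)) (φ : S →* M) (u : S) :
    φ (ω u) = 1 ↔ IsUnit (φ u) := by
  obtain ⟨n, hn⟩ := hpow u
  have hpow_φ : φ (ω u) = φ u ^ (n + 1) := by rw [hn, map_pow]
  exact ⟨fun h => .of_pow_eq_one (hpow_φ ▸ h) n.succ_ne_zero, fun h =>
    (IsIdempotentElem.iff_eq_one_of_isUnit (hpow_φ ▸ h.pow (n + 1))).mp ((hidem u).map φ)⟩

theorem omega_mul_omega_mul_eq_iff (hpow : ∀ s : S, ∃ n : ℕ, ω s = s ^ (n + 1))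
    (hidem : ∀ s : S, IsIdempotentElem (ω s)) (hleft : ∀ s t : S, s * t * ω s = s * t)
    (s t : S) : ω t * ω (s * t) = ω t ↔ ω t * ω s = ω t := by
  let φ := (hidem t).mulLeftCornerHom (mul_mul_self_of_isIdempotentElem hpow hleft (hidem t))
  have hunit : ∀ u, ω t * ω u = ω t ↔ IsUnit (φ u) := fun u =>
    Subtype.ext_iff.symm.trans (map_omega_eq_one_iff hpow hidem φ u)
  rw [hunit, hunit, map_mul, IsUnit.mul_right_iff ((hunit t).mp (hidem t).eq)]

end LRBG

theorem lrbg_H_R_product_formula_general {S : Type*} [Monoid S] (ω : S → S)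
    (hidem : ∀ s : S, ω s * ω s = ω s)
    (hpow : ∀ s : S, ∃ n : ℕ, ω s = (fun t => t * s)^[n] s)
    (lrbg2 : ∀ s t : S, s * t * ω s = s * t)
    (e : S → MonoidAlgebra ℂ S)
    (heconst : ∀ y y' : S, y * y = y → y' * y' = y' → LRBGsim ω y y' → e y = e y')
    (hsaliola : ∀ x y : S, x * x = x → y * y = y → ¬ LRBGsim ω (x * y) y →
      (MonoidAlgebra.single x 1 : MonoidAlgebra ℂ S) * e y = 0) :
    ∀ s t : S,
      (LRBGsim ω (ω s * ω t) (ω t) →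
        (MonoidAlgebra.single s 1 : MonoidAlgebra ℂ S) *
            (MonoidAlgebra.single t 1 * e (ω t)) =
          MonoidAlgebra.single (s * t) 1 * e (ω (s * t))) ∧
      (¬ LRBGsim ω (ω s * ω t) (ω t) →
        (MonoidAlgebra.single s 1 : MonoidAlgebra ℂ S) *
            (MonoidAlgebra.single t 1 * e (ω t)) = 0) := by
  have hpow' : ∀ s : S, ∃ n : ℕ, ω s = s ^ (n + 1) := fun s =>
    (hpow s).imp fun n hn => hn.trans (iterate_mul_right_self s n)
  intro s t
  have hsupp : LRBGsim ω (ω s * ω t) (ω t) ↔ ω t * ω (s * t) = ω t := by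
    rw [lrbgSim_mul_iff hpow' lrbg2 (hidem s) (hidem t),
      omega_mul_omega_mul_eq_iff hpow' hidem lrbg2]
  have hsingle : ∀ x y : S, (MonoidAlgebra.single x 1 : MonoidAlgebra ℂ S) *
      MonoidAlgebra.single y 1 = MonoidAlgebra.single (x * y) 1 := fun x y => by
    rw [MonoidAlgebra.single_mul_single, one_mul]
  rw [← mul_assoc, hsingle]
  refine ⟨fun h => ?_, fun h => ?_⟩
  · refine congrArg _ (heconst _ _ (hidem t) (hidem (s * t)) ?_)
    rw [lrbgSim_iff_of_isIdempotentElem hpow' (hidem t) (hidem (s * t))]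
    exact ⟨hsupp.mp h, omega_mul_mul_omega_right hpow' lrbg2 s t⟩
  · have hzero := hsaliola _ _ (hidem (s * t)) (hidem t)
      (by rwa [lrbgSim_mul_iff hpow' lrbg2 (hidem (s * t)) (hidem t), ← hsupp])
    rw [← mul_omega_eq_self lrbg2 (s * t), ← hsingle, mul_assoc, hzero, mul_zero]

/-- For a finite monoid `S` which is an LRBG, with elements
`e_y ∈ ℂ[S]` (for idempotent `y`) constant on `∼`-classes and satisfying Saliola's
property, and `R_t := H_t · e_{ω t}`, one has `H_s · R_t = R_{s·t}` if
`(ω s)·(ω t) ∼ ω t`, and `H_s · R_t = 0` otherwise. -/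
theorem lrbg_H_R_product_formula {S : Type*} [Monoid S] [Fintype S] (ω : S → S)
    (hidem : ∀ s : S, ω s * ω s = ω s)
    (hpow : ∀ s : S, ∃ n : ℕ, ω s = (fun t => t * s)^[n] s)
    (lrbg1 : ∀ s : S, ω s * s = s)
    (lrbg2 : ∀ s t : S, s * t * ω s = s * t)
    (e : S → MonoidAlgebra ℂ S)
    (heconst : ∀ y y' : S, y * y = y → y' * y' = y' → LRBGsim ω y y' → e y = e y')
    (hsaliola : ∀ x y : S, x * x = x → y * y = y → ¬ LRBGsim ω (x * y) y →
      (MonoidAlgebra.single x 1 : MonoidAlgebra ℂ S) * e y = 0) :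
    ∀ s t : S,
      (LRBGsim ω (ω s * ω t) (ω t) →
        (MonoidAlgebra.single s 1 : MonoidAlgebra ℂ S) *
            (MonoidAlgebra.single t 1 * e (ω t)) =
          MonoidAlgebra.single (s * t) 1 * e (ω (s * t))) ∧
      (¬ LRBGsim ω (ω s * ω t) (ω t) →
        (MonoidAlgebra.single s 1 : MonoidAlgebra ℂ S) *
            (MonoidAlgebra.single t 1 * e (ω t)) = 0) :=
  lrbg_H_R_product_formula_general ω hidem hpow lrbg2 e heconst hsaliola
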